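/- Let F and G be nonconstant meromorphic functions with H ≡ 0, where H = (F''/F' − 2F'/(F−1)) − (G''/G' − 2G'/(G−1)), and suppose F and G share (∞,0). Then F and G share (1,∞) and (∞,∞). -/

import Mathlib

open Real MeasureTheory Metric Filter
open scoped Classical

noncomputable section

namespace Nev

/-- The positive part of the logarithm, `log⁺ x = max (log x) 0`. -/
def logPos (x : ℝ) : ℝ := max (Real.log x) 0

/-- The order of a function at a point, as an integer (junk value `0` if `f` is not
meromorphic at `z` or the order is `⊤`). -/
def mOrder (f : ℂ → ℂ) (z : ℂ) : ℤ :=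
  if h : MeromorphicAt f z then (meromorphicOrderAt f z).untopD 0 else 0

/-- Multiplicity of `z` as a zero of `f`. -/
def zmult (f : ℂ → ℂ) (z : ℂ) : ℕ := (mOrder f z).toNat

/-- Multiplicity of `z` as a pole of `f`. -/
def pmult (f : ℂ → ℂ) (z : ℂ) : ℕ := (-(mOrder f z)).toNat

/-- Multiplicity of `z` as an `a`-point of `f`. -/
def amult (f : ℂ → ℂ) (a z : ℂ) : ℕ := zmult (fun w => f w - a) z

/-- The unintegrated counting function `n(t)` attached to a multiplicity weight `w`. -/
def cfun (w : ℂ → ℕ) (t : ℝ) : ℝ := ∑ᶠ z ∈ closedBall (0 : ℂ) t, (w z : ℝ)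

/-- The integrated (Nevanlinna) counting function attached to a multiplicity weight `w`:
`N(r) = ∫₀^r (n(t) - n(0))/t dt + n(0) log r`. -/
def Nc (w : ℂ → ℕ) (r : ℝ) : ℝ :=
  (∫ t in (0:ℝ)..r, (cfun w t - cfun w 0) / t) + cfun w 0 * Real.log r

/-- The Nevanlinna proximity function `m(r,f)`. -/
def prox (f : ℂ → ℂ) (r : ℝ) : ℝ :=
  (2 * π)⁻¹ * ∫ θ in (0:ℝ)..(2 * π), logPos ‖f ((r : ℂ) * Complex.exp (θ * Complex.I))‖

/-- The Nevanlinna characteristic function `T(r,f) = m(r,f) + N(r,∞;f)`. -/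
def Tchar (f : ℂ → ℂ) (r : ℝ) : ℝ := prox f r + Nc (pmult f) r

/-- `f` has order zero: `limsup_{r→∞} log T(r,f) / log r = 0`. -/
def ZeroOrder (f : ℂ → ℂ) : Prop :=
  Filter.limsup (fun r => Real.log (Tchar f r) / Real.log r) Filter.atTop = 0

/-- `f` is transcendental: `T(r,f)/log r → ∞`. -/
def TranscendentalFn (f : ℂ → ℂ) : Prop :=
  Filter.Tendsto (fun r => Tchar f r / Real.log r) Filter.atTop Filter.atTop

/-- A set `E ⊆ ℝ` has finite logarithmic measure. -/
def FinLogMeasure (E : Set ℝ) : Prop :=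
  ∫⁻ t in E ∩ Set.Ioi 1, ENNReal.ofReal (1 / t) ≠ ⊤

/-- `s(r) = S(r,f)`: `s(r) = o(T(r,f))` as `r → ∞` outside a possible exceptional set of
finite logarithmic measure. -/
def SmallQty (s : ℝ → ℝ) (f : ℂ → ℂ) : Prop :=
  ∃ E : Set ℝ, FinLogMeasure E ∧
    Filter.Tendsto (fun r => s r / Tchar f r)
      (Filter.atTop ⊓ Filter.principal Eᶜ) (nhds 0)

/-- A set `E ⊆ [1,∞)` has logarithmic density 1. -/
def LogDensityOne (E : Set ℝ) : Prop :=
  Filter.limsup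
    (fun r => (∫ t in E ∩ Set.Icc 1 r, (1 : ℝ) / t) / Real.log r) Filter.atTop = 1

/-- `f` and `g` share the value `a` with weight `k`, i.e. `E_k(a,f) = E_k(a,g)`. -/
def ShareK (f g : ℂ → ℂ) (a : ℂ) (k : ℕ) : Prop :=
  ∀ z, min (amult f a z) (k + 1) = min (amult g a z) (k + 1)

/-- `f` and `g` share the value `a` CM (counting multiplicities). -/
def ShareCM (f g : ℂ → ℂ) (a : ℂ) : Prop := ∀ z, amult f a z = amult g a z

/-- `f` and `g` share `∞` IM. -/
def SharePolesIM (f g : ℂ → ℂ) : Prop :=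
  ∀ z, min (pmult f z) 1 = min (pmult g z) 1

/-- `f` is meromorphic in the whole plane. -/
def MeroOn (f : ℂ → ℂ) : Prop := ∀ z, MeromorphicAt f z

/-- `f` is entire. -/
def EntireFn (f : ℂ → ℂ) : Prop := ∀ z : ℂ, AnalyticAt ℂ f z

/-- `f` is not a constant function. -/
def NonconstantFn (f : ℂ → ℂ) : Prop := ¬ ∃ c : ℂ, ∀ z, f z = c

/-- The `q`-shift difference operator `L(z,f) = b₁ f(qz+c) + b₀ f(z)`. -/
def Lop (q c b1 b0 : ℂ) (f : ℂ → ℂ) : ℂ → ℂ := fun z => b1 * f (q * z + c) + b0 * f z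

/-- Number of distinct simple zeros of a polynomial. -/
def m1 (P : Polynomial ℂ) : ℕ :=
  (P.roots.toFinset.filter fun z => P.roots.count z = 1).card

/-- Number of distinct multiple zeros of a polynomial. -/
def m2 (P : Polynomial ℂ) : ℕ :=
  (P.roots.toFinset.filter fun z => 2 ≤ P.roots.count z).card

/-- `Γ₀ = m₁ + 2 m₂`. -/
def Γ0 (P : Polynomial ℂ) : ℕ := m1 P + 2 * m2 P

/-- `Γ₁ = m₁ + m₂`. -/
def Γ1 (P : Polynomial ℂ) : ℕ := m1 P + m2 P

/-- The auxiliary function `H` built from `F` and `G`. -/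
def Hfun (F G : ℂ → ℂ) : ℂ → ℂ := fun z =>
  (deriv (deriv F) z / deriv F z - 2 * deriv F z / (F z - 1)) -
    (deriv (deriv G) z / deriv G z - 2 * deriv G z / (G z - 1))

open Topology Set

def _root_.MeromorphicAt.order {f : ℂ → ℂ} {z : ℂ} (_hf : MeromorphicAt f z) : WithTop ℤ :=
  meromorphicOrderAt f z

lemma _root_.MeromorphicAt.order_eq_top_iff {f : ℂ → ℂ} {z : ℂ} (hf : MeromorphicAt f z) :
    hf.order = ⊤ ↔ ∀ᶠ w in 𝓝[≠] z, f w = 0 := meromorphicOrderAt_eq_top_iff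

lemma _root_.MeromorphicAt.order_eq_int_iff {f : ℂ → ℂ} {z : ℂ} (hf : MeromorphicAt f z) (n : ℤ) :
    hf.order = n ↔ ∃ g : ℂ → ℂ, AnalyticAt ℂ g z ∧ g z ≠ 0 ∧
      ∀ᶠ w in 𝓝[≠] z, f w = (w - z) ^ n • g w := meromorphicOrderAt_eq_int_iff hf

/-- from punctured-nbhd eventual equality get an open punctured set of equality -/
lemma exists_open_of_eventually_nhdsNE {z : ℂ} {P : ℂ → Prop}
    (h : ∀ᶠ w in 𝓝[≠] z, P w) :
    ∃ s : Set ℂ, IsOpen s ∧ z ∈ s ∧ ∀ w ∈ s, w ≠ z → P w := by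
  rw [eventually_nhdsWithin_iff] at h
  obtain ⟨s, hs, hso, hz⟩ := _root_.eventually_nhds_iff.mp h
  exact ⟨s, hso, hz, fun w hw hwz => hs w hw hwz⟩

/-- derivative respects punctured-neighborhood equality -/
lemma deriv_eventuallyEq_nhdsNE {f g : ℂ → ℂ} {z : ℂ} (h : f =ᶠ[𝓝[≠] z] g) :
    deriv f =ᶠ[𝓝[≠] z] deriv g := by
  obtain ⟨s, hso, hzs, hs⟩ := exists_open_of_eventually_nhdsNE h
  have : ∀ᶠ w in 𝓝[≠] z, w ∈ s := eventually_nhdsWithin_of_eventually_nhds (hso.eventually_mem hzs)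
  filter_upwards [this, self_mem_nhdsWithin] with w hw hwz'
  have hwz : w ≠ z := hwz'
  have : f =ᶠ[𝓝 w] g := by
    have : s \ {z} ∈ 𝓝 w := ((hso.sdiff isClosed_singleton).mem_nhds ⟨hw, hwz⟩)
    filter_upwards [this] with y hy using hs y hy.1 hy.2
  exact this.deriv_eq

/-- a set which is punctured-eventually avoided everywhere is countable -/
lemma countable_of_eventually_compl {S : Set ℂ} (h : ∀ z, ∀ᶠ w in 𝓝[≠] z, w ∉ S) :
    S.Countable := by
  have hd : IsClosed S ∧ DiscreteTopology S := by
    rw [← isDiscrete_iff_discreteTopology, isClosed_and_discrete_iff]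
    intro x
    rw [disjoint_principal_right]
    exact h x
  haveI := hd.2
  haveI : SecondCountableTopology S := inferInstance
  haveI : TopologicalSpace.SeparableSpace S := inferInstance
  have : Countable S := TopologicalSpace.separableSpace_iff_countable.mp inferInstance
  exact Set.countable_coe_iff.mp this


lemma order_congr {f g : ℂ → ℂ} {z : ℂ} (hf : MeromorphicAt f z)
    (h : f =ᶠ[𝓝[≠] z] g) : (hf.congr h).order = hf.order := by
  rcases eq_or_ne hf.order ⊤ with ht | ht
  · rw [ht, MeromorphicAt.order_eq_top_iff]
    filter_upwards [hf.order_eq_top_iff.mp ht, h] with w h1 h2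
    rw [← h2]; exact h1
  · obtain ⟨n, hn⟩ := WithTop.ne_top_iff_exists.mp ht
    obtain ⟨g₁, hg₁, hg₁0, heq⟩ := (hf.order_eq_int_iff n).mp hn.symm
    rw [← hn]
    refine ((hf.congr h).order_eq_int_iff n).mpr ⟨g₁, hg₁, hg₁0, ?_⟩
    filter_upwards [heq, h] with w h1 h2
    rw [← h2]; exact h1

lemma order_const {c : ℂ} (hc : c ≠ 0) (z : ℂ) :
    (MeromorphicAt.const c z).order = 0 := by
  refine ((MeromorphicAt.const c z).order_eq_int_iff 0).mpr
    ⟨fun _ => c, analyticAt_const, hc, ?_⟩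
  filter_upwards with w; simp

lemma order_inv_of_int {f : ℂ → ℂ} {z : ℂ} (hf : MeromorphicAt f z) (n : ℤ)
    (hn : hf.order = n) : hf.inv.order = -n := by
  obtain ⟨g, hg, hg0, heq⟩ := (hf.order_eq_int_iff n).mp hn
  refine (hf.inv.order_eq_int_iff (-n)).mpr ⟨g⁻¹, hg.inv hg0, by simp [hg0], ?_⟩
  have : ∀ᶠ w in 𝓝[≠] z, w ≠ z := self_mem_nhdsWithin
  filter_upwards [heq, this] with w h1 hw
  rw [Pi.inv_apply, h1]
  simp only [smul_eq_mul, mul_inv, Pi.inv_apply, ← zpow_neg]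

lemma order_const_smul {f : ℂ → ℂ} {z : ℂ} (hf : MeromorphicAt f z) {C : ℂ} (hC : C ≠ 0) :
    (((MeromorphicAt.const C z)).mul hf).order = hf.order := by
  rcases eq_or_ne hf.order ⊤ with ht | ht
  · rw [ht, MeromorphicAt.order_eq_top_iff]
    filter_upwards [hf.order_eq_top_iff.mp ht] with w h1
    simp [Pi.mul_apply, h1]
  · obtain ⟨n, hn⟩ := WithTop.ne_top_iff_exists.mp ht
    rw [← hn]
    obtain ⟨g, hg, hg0, heq⟩ := (hf.order_eq_int_iff n).mp hn.symm
    refine (((MeromorphicAt.const C z).mul hf).order_eq_int_iff n).mpr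
      ⟨fun w => C * g w, analyticAt_const.mul hg, by simp [hC, hg0], ?_⟩
    filter_upwards [heq] with w h1
    simp only [Pi.mul_apply, h1, smul_eq_mul]; ring

/-- order of pointwise sum when one order is strictly smaller -/
lemma order_add_of_lt {f g h : ℂ → ℂ} {z : ℂ} (hf : MeromorphicAt f z)
    (hg : MeromorphicAt g z) (hh : MeromorphicAt h z)
    (heq : ∀ w, h w = f w + g w) (m : ℤ) (hm : hf.order = m)
    (hlt : (m : WithTop ℤ) < hg.order) : hh.order = m := by
  obtain ⟨g₁, hg₁, hg₁0, heq₁⟩ := (hf.order_eq_int_iff m).mp hm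
  rcases eq_or_ne hg.order ⊤ with ht | ht
  · have hgz := hg.order_eq_top_iff.mp ht
    refine (hh.order_eq_int_iff m).mpr ⟨g₁, hg₁, hg₁0, ?_⟩
    filter_upwards [heq₁, hgz] with w h1 h2
    rw [heq w, h2, add_zero, h1]
  · obtain ⟨k, hk⟩ := WithTop.ne_top_iff_exists.mp ht
    have hmk : m < k := by rw [← hk] at hlt; exact_mod_cast hlt
    obtain ⟨g₂, hg₂, hg₂0, heq₂⟩ := (hg.order_eq_int_iff k).mp hk.symm
    refine (hh.order_eq_int_iff m).mpr
      ⟨fun w => g₁ w + (w - z) ^ (k - m).toNat * g₂ w,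
        hg₁.add ((((analyticAt_id).sub analyticAt_const).pow _).mul hg₂), ?_, ?_⟩
    · have h0 : ((0:ℂ)) ^ (k - m).toNat = 0 := zero_pow (by omega)
      simp only [sub_self, h0, zero_mul, add_zero]
      exact hg₁0
    · have : ∀ᶠ w in 𝓝[≠] z, w ≠ z := self_mem_nhdsWithin
      filter_upwards [heq₁, heq₂, this] with w h1 h2 hw
      have hwz : w - z ≠ 0 := sub_ne_zero.mpr hw
      rw [heq w, h1, h2]
      have : (w - z) ^ (k : ℤ) = (w - z) ^ (m : ℤ) * (w - z) ^ (k - m).toNat := by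
        rw [← zpow_natCast (w - z) (k - m).toNat, ← zpow_add₀ hwz]
        congr 1
        omega
      rw [this]
      simp only [smul_eq_mul]; ring

/-- order ≥ 0 iff punctured-eventually equal to an analytic function -/
lemma order_nonneg_iff {f : ℂ → ℂ} {z : ℂ} (hf : MeromorphicAt f z) :
    0 ≤ hf.order ↔ ∃ g : ℂ → ℂ, AnalyticAt ℂ g z ∧ f =ᶠ[𝓝[≠] z] g := by
  constructor
  · intro h
    rcases eq_or_ne hf.order ⊤ with ht | ht
    · exact ⟨0, analyticAt_const, hf.order_eq_top_iff.mp ht⟩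
    · obtain ⟨n, hn⟩ := WithTop.ne_top_iff_exists.mp ht
      have hn0 : 0 ≤ n := by rw [← hn] at h; exact_mod_cast h
      obtain ⟨g, hg, hg0, heq⟩ := (hf.order_eq_int_iff n).mp hn.symm
      refine ⟨fun w => (w - z) ^ n.toNat * g w,
        (((analyticAt_id).sub analyticAt_const).pow _).mul hg, ?_⟩
      filter_upwards [heq, self_mem_nhdsWithin] with w h1 hw
      rw [h1]
      have : (w - z) ^ (n : ℤ) = (w - z) ^ n.toNat := by
        rw [← zpow_natCast (w - z) n.toNat]
        congr 1
        omega
      rw [this]; simp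
  · rintro ⟨g, hg, heq⟩
    have h1 : (hg.meromorphicAt.congr heq.symm).order = hg.meromorphicAt.order :=
      order_congr hg.meromorphicAt heq.symm
    have h2 : hf.order = hg.meromorphicAt.order := by
      have : hg.meromorphicAt.congr heq.symm = hf := rfl
      rw [← h1]
    rw [h2, MeromorphicAt.order, hg.meromorphicOrderAt_eq]
    rcases eq_or_ne (analyticOrderAt g z) ⊤ with ht | ht
    · rw [ht, ENat.map_top]; exact le_top
    · obtain ⟨n, hn⟩ := ENat.ne_top_iff_exists.mp ht
      rw [← hn, ENat.map_natCast]
      exact_mod_cast Nat.zero_le n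

/-- punctured-eventual nonvanishing when the order is an integer -/
lemma eventually_ne_zero_of_order_int {f : ℂ → ℂ} {z : ℂ} (hf : MeromorphicAt f z)
    (ht : hf.order ≠ ⊤) : ∀ᶠ w in 𝓝[≠] z, f w ≠ 0 := by
  obtain ⟨n, hn⟩ := WithTop.ne_top_iff_exists.mp ht
  obtain ⟨g, hg, hg0, heq⟩ := (hf.order_eq_int_iff n).mp hn.symm
  have hgne : ∀ᶠ w in 𝓝 z, g w ≠ 0 := hg.continuousAt.eventually_ne hg0
  filter_upwards [heq, eventually_nhdsWithin_of_eventually_nhds hgne,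
    self_mem_nhdsWithin] with w h1 h2 hw
  rw [h1]
  exact mul_ne_zero (zpow_ne_zero _ (sub_ne_zero.mpr hw)) h2


lemma analyticAt_deriv {f : ℂ → ℂ} {z : ℂ} (hf : AnalyticAt ℂ f z) :
    AnalyticAt ℂ (deriv f) z := by
  have h1 : AnalyticOnNhd ℂ f {w | AnalyticAt ℂ f w} := fun w hw => hw
  exact h1.deriv_of_isOpen (isOpen_analyticAt ℂ f) z hf

lemma meromorphicAt_deriv {f : ℂ → ℂ} {z : ℂ} (hf : MeromorphicAt f z) :
    MeromorphicAt (deriv f) z := by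
  obtain ⟨n, hn⟩ := hf
  set g : ℂ → ℂ := fun w => (w - z) ^ n • f w with hg
  have hga : AnalyticAt ℂ g z := hn
  have key : deriv f =ᶠ[𝓝[≠] z]
      fun w => (-(n:ℤ)) * (w - z) ^ (-(n:ℤ) - 1) * g w + (w - z) ^ (-(n:ℤ)) * deriv g w := by
    have hev : ∀ᶠ w in 𝓝[≠] z, AnalyticAt ℂ g w :=
      eventually_nhdsWithin_of_eventually_nhds hga.eventually_analyticAt
    have hne : ∀ᶠ w in 𝓝[≠] z, w ≠ z := self_mem_nhdsWithin
    filter_upwards [hev, hne] with w hgw hwz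
    -- near w, f agrees with (· - z)^(-n) * g
    have hfg : f =ᶠ[𝓝 w] fun u => (u - z) ^ (-(n:ℤ)) * g u := by
      filter_upwards [eventually_ne_nhds hwz] with u hu
      have huz : u - z ≠ 0 := sub_ne_zero.mpr hu
      rw [hg]
      simp only [smul_eq_mul]
      rw [← mul_assoc, zpow_neg, zpow_natCast, inv_mul_cancel₀ (pow_ne_zero _ huz), one_mul]
    rw [hfg.deriv_eq]
    have hz1 : HasDerivAt (fun u : ℂ => u - z) 1 w := (hasDerivAt_id w).sub_const z
    have hzp : HasDerivAt (fun u : ℂ => (u - z) ^ (-(n:ℤ)))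
        ((-(n:ℤ)) * (w - z) ^ (-(n:ℤ) - 1)) w := by
      have := (hasDerivAt_zpow (-(n:ℤ)) (w - z) (Or.inl (sub_ne_zero.mpr hwz))).comp w hz1
      simpa [Function.comp_def] using this
    have hgd : HasDerivAt g (deriv g w) w := hgw.differentiableAt.hasDerivAt
    have := hzp.mul hgd
    exact this.deriv
  have hm : MeromorphicAt
      (fun w => (-(n:ℤ)) * (w - z) ^ (-(n:ℤ) - 1) * g w + (w - z) ^ (-(n:ℤ)) * deriv g w) z := by
    have hid : MeromorphicAt (fun w : ℂ => w - z) z :=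
      (MeromorphicAt.id z).sub (MeromorphicAt.const z z)
    exact ((((MeromorphicAt.const _ z).mul (hid.zpow _)).mul hga.meromorphicAt).add
      ((hid.zpow _).mul (analyticAt_deriv hga).meromorphicAt))
  exact hm.congr key.symm


/-- dichotomy: a function meromorphic on ℂ is either germ-zero everywhere or nowhere -/
lemma germZero_dichotomy {f : ℂ → ℂ} (hf : ∀ z, MeromorphicAt f z) :
    (∀ z, ∀ᶠ w in 𝓝[≠] z, f w = 0) ∨ (∀ z, ¬ ∀ᶠ w in 𝓝[≠] z, f w = 0) := by
  set Z : Set ℂ := {z | ∀ᶠ w in 𝓝[≠] z, f w = 0} with hZ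
  have hopen : IsOpen Z := by
    rw [isOpen_iff_mem_nhds]
    intro z hz
    have hz' : ∀ᶠ w in 𝓝[≠] z, f w = 0 := hz
    rw [eventually_nhdsWithin_iff, _root_.eventually_nhds_iff] at hz'
    replace hz := hz'
    obtain ⟨s, hs, hso, hzs⟩ := hz
    rw [_root_.mem_nhds_iff]
    refine ⟨s, fun w hw => ?_, hso, hzs⟩
    rcases eq_or_ne w z with rfl | hwz
    · rw [hZ, mem_setOf_eq, eventually_nhdsWithin_iff, _root_.eventually_nhds_iff]
      exact ⟨s, hs, hso, hzs⟩
    · have : s \ {z} ∈ 𝓝 w := (hso.sdiff isClosed_singleton).mem_nhds ⟨hw, hwz⟩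
      rw [hZ, mem_setOf_eq]
      refine eventually_nhdsWithin_of_eventually_nhds ?_
      filter_upwards [this] with y hy using hs y hy.1 hy.2
  have hclosed : IsClosed Z := by
    rw [← isOpen_compl_iff, isOpen_iff_mem_nhds]
    intro z hz
    have hz' : ¬ ∀ᶠ w in 𝓝[≠] z, f w = 0 := hz
    rw [← (hf z).order_eq_top_iff] at hz'
    replace hz := hz'
    have hne := eventually_ne_zero_of_order_int (hf z) hz
    rw [eventually_nhdsWithin_iff, _root_.eventually_nhds_iff] at hne
    obtain ⟨s, hs, hso, hzs⟩ := hne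
    rw [_root_.mem_nhds_iff]
    refine ⟨s, fun w hw => ?_, hso, hzs⟩
    rcases eq_or_ne w z with rfl | hwz
    · rw [mem_compl_iff, hZ, mem_setOf_eq, ← (hf w).order_eq_top_iff]
      exact hz
    · rw [mem_compl_iff, hZ, mem_setOf_eq]
      intro hcon
      have h1 : ∀ᶠ y in 𝓝[≠] w, f y ≠ 0 := by
        have : s \ {z} ∈ 𝓝 w := (hso.sdiff isClosed_singleton).mem_nhds ⟨hw, hwz⟩
        refine eventually_nhdsWithin_of_eventually_nhds ?_
        filter_upwards [this] with y hy using hs y hy.1 hy.2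
      have : ∀ᶠ y in 𝓝[≠] w, False := by
        filter_upwards [hcon, h1] with y h2 h3 using h3 h2
      obtain ⟨y, hy⟩ := this.exists
      exact hy
  have := isClopen_iff.mp ⟨hclosed, hopen⟩
  rcases this with h | h
  · right
    intro z hz
    have hzZ : z ∈ Z := hz
    rw [h] at hzZ
    exact hzZ
  · left
    intro z
    have hzZ : z ∈ Z := by rw [h]; trivial
    exact hzZ


lemma const_of_hasDerivAt_zero {U : Set ℂ} (hUo : IsOpen U) (hUc : IsPreconnected U)
    {f : ℂ → ℂ} (hd : ∀ z ∈ U, HasDerivAt f 0 z) {x y : ℂ} (hx : x ∈ U) (hy : y ∈ U) :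
    f x = f y := by
  haveI : PreconnectedSpace U := Subtype.preconnectedSpace hUc
  have hloc : IsLocallyConstant (fun p : U => f p.1) := by
    rw [IsLocallyConstant.iff_exists_open]
    rintro ⟨z, hz⟩
    obtain ⟨r, hr, hball⟩ := isOpen_iff.mp hUo z hz
    refine ⟨Subtype.val ⁻¹' ball z r, isOpen_ball.preimage continuous_subtype_val,
      mem_preimage.mpr (mem_ball_self hr), ?_⟩
    rintro ⟨w, hw⟩ hwb
    have hconv : Convex ℝ (ball z r) := convex_ball z r
    have hdiff : DifferentiableOn ℂ f (ball z r) := fun u hu =>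
      (hd u (hball hu)).differentiableAt.differentiableWithinAt
    have hderiv : ∀ u ∈ ball z r, fderivWithin ℂ f (ball z r) u = 0 := by
      intro u hu
      rw [fderivWithin_of_isOpen isOpen_ball hu]
      have := (hd u (hball hu)).hasFDerivAt.fderiv
      rw [this]
      ext1
      simp
    exact hconv.is_const_of_fderivWithin_eq_zero hdiff hderiv hwb (mem_ball_self hr)
  exact hloc.apply_eq_of_preconnectedSpace ⟨x, hx⟩ ⟨y, hy⟩


/-- if the derivative is germ-zero at `z` then the order of `f` at `z` is `0` or `⊤` -/
lemma order_flat {f : ℂ → ℂ} {z : ℂ} (hf : MeromorphicAt f z)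
    (hflat : ∀ᶠ w in 𝓝[≠] z, deriv f w = 0) : hf.order = 0 ∨ hf.order = ⊤ := by
  by_contra hcon
  push_neg at hcon
  obtain ⟨h0, ht⟩ := hcon
  obtain ⟨n, hn⟩ := WithTop.ne_top_iff_exists.mp ht
  have hn0 : n ≠ 0 := by
    intro h; rw [h] at hn; exact h0 hn.symm
  obtain ⟨g, hg, hg0, heq⟩ := (hf.order_eq_int_iff n).mp hn.symm
  -- derivative of the model function
  have hder := deriv_eventuallyEq_nhdsNE heq
  have hgd : AnalyticAt ℂ (deriv g) z := analyticAt_deriv hg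
  have hk : ContinuousAt (fun w => (n : ℂ) * g w + (w - z) * deriv g w) z :=
    (continuousAt_const.mul hg.continuousAt).add
      (((continuousAt_id.sub continuousAt_const)).mul hgd.continuousAt)
  have hkz : (n : ℂ) * g z + (z - z) * deriv g z ≠ 0 := by
    simp only [sub_self, zero_mul, add_zero]
    exact mul_ne_zero (by exact_mod_cast hn0) hg0
  have hkne : ∀ᶠ w in 𝓝 z, (n : ℂ) * g w + (w - z) * deriv g w ≠ 0 :=
    hk.eventually_ne hkz
  have hga : ∀ᶠ w in 𝓝 z, AnalyticAt ℂ g w := hg.eventually_analyticAt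
  have : ∀ᶠ w in 𝓝[≠] z, False := by
    filter_upwards [hder, hflat, eventually_nhdsWithin_of_eventually_nhds hkne,
      eventually_nhdsWithin_of_eventually_nhds hga, self_mem_nhdsWithin] with w hd hf0 hkw hgw hwz
    -- compute deriv of the model at w
    have hwz' : w - z ≠ 0 := sub_ne_zero.mpr hwz
    have h1 : HasDerivAt (fun u : ℂ => (u - z) ^ (n:ℤ)) ((n:ℂ) * (w - z) ^ ((n:ℤ) - 1)) w := by
      have := (hasDerivAt_zpow (n:ℤ) (w - z) (Or.inl hwz')).comp w ((hasDerivAt_id w).sub_const z)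
      simpa [Function.comp_def] using this
    have h2 : HasDerivAt (fun u => (u - z) ^ (n:ℤ) • g u)
        ((n:ℂ) * (w - z) ^ ((n:ℤ) - 1) * g w + (w - z) ^ (n:ℤ) * deriv g w) w := by
      simpa [smul_eq_mul, Pi.mul_def] using h1.mul hgw.differentiableAt.hasDerivAt
    have h3 := h2.deriv
    rw [hd, h3] at hf0
    have : (w - z) ^ ((n:ℤ) - 1) * ((n:ℂ) * g w + (w - z) * deriv g w) = 0 := by
      rw [← hf0]
      have : (w - z) ^ (n:ℤ) = (w - z) ^ ((n:ℤ) - 1) * (w - z) := by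
        rw [← zpow_add_one₀ hwz']
        ring_nf
      rw [this]
      ring
    rcases mul_eq_zero.mp this with h | h
    · exact zpow_ne_zero _ hwz' h
    · exact hkw h
  obtain ⟨y, hy⟩ := this.exists
  exact hy

lemma mOrder_eq_untop {f : ℂ → ℂ} {z : ℂ} (hf : MeromorphicAt f z) :
    mOrder f z = hf.order.untopD 0 := by
  rw [mOrder, dif_pos hf]; rfl


/-- if `deriv f` is not germ-zero at any point, then `f - 1` has integer order everywhere -/
lemma order_sub_one_ne_top {f : ℂ → ℂ} (hf : ∀ z, MeromorphicAt f z)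
    (hnf : ∀ z, ¬ ∀ᶠ w in 𝓝[≠] z, deriv f w = 0) (z : ℂ) :
    ((hf z).sub (MeromorphicAt.const 1 z)).order ≠ ⊤ := by
  intro ht
  apply hnf z
  have h1 : (fun w => f w - 1) =ᶠ[𝓝[≠] z] (fun _ => 0) := by
    have := ((hf z).sub (MeromorphicAt.const 1 z)).order_eq_top_iff.mp ht
    filter_upwards [this] with w hw using hw
  have h2 : f =ᶠ[𝓝[≠] z] (fun _ => (1:ℂ)) := by
    filter_upwards [h1] with w hw
    have : f w - 1 = 0 := hw
    exact sub_eq_zero.mp this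
  have h3 := deriv_eventuallyEq_nhdsNE h2
  filter_upwards [h3] with w hw
  rw [hw, deriv_const]

lemma honest_isOpen (f : ℂ → ℂ) :
    IsOpen {z | AnalyticAt ℂ f z ∧ deriv f z ≠ 0 ∧ f z ≠ 1} := by
  rw [isOpen_iff_mem_nhds]
  rintro z ⟨ha, hd, h1⟩
  have e1 : ∀ᶠ w in 𝓝 z, AnalyticAt ℂ f w := ha.eventually_analyticAt
  have e2 : ∀ᶠ w in 𝓝 z, deriv f w ≠ 0 := (analyticAt_deriv ha).continuousAt.eventually_ne hd
  have e3 : ∀ᶠ w in 𝓝 z, f w ≠ 1 := ha.continuousAt.eventually_ne h1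
  filter_upwards [e1, e2, e3] with w h1 h2 h3 using ⟨h1, h2, h3⟩

lemma honest_eventually {f : ℂ → ℂ} (hf : ∀ z, MeromorphicAt f z)
    (hnf : ∀ z, ¬ ∀ᶠ w in 𝓝[≠] z, deriv f w = 0) (z : ℂ) :
    ∀ᶠ w in 𝓝[≠] z, w ∈ {z | AnalyticAt ℂ f z ∧ deriv f z ≠ 0 ∧ f z ≠ 1} := by
  have e1 : ∀ᶠ w in 𝓝[≠] z, AnalyticAt ℂ f w := (hf z).eventually_analyticAt
  have e2 : ∀ᶠ w in 𝓝[≠] z, deriv f w ≠ 0 := by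
    refine eventually_ne_zero_of_order_int (meromorphicAt_deriv (hf z)) ?_
    intro ht
    exact hnf z ((meromorphicAt_deriv (hf z)).order_eq_top_iff.mp ht)
  have e3 : ∀ᶠ w in 𝓝[≠] z, f w - 1 ≠ 0 :=
    eventually_ne_zero_of_order_int ((hf z).sub (MeromorphicAt.const 1 z))
      (order_sub_one_ne_top hf hnf z)
  filter_upwards [e1, e2, e3] with w h1 h2 h3
  exact ⟨h1, h2, sub_ne_zero.mp h3⟩

/-- an open set which is punctured-eventual everywhere is preconnected, nonempty,
and belongs to every punctured neighbourhood filter -/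
lemma good_set_facts {U : Set ℂ} (hop : IsOpen U) (hev : ∀ z, ∀ᶠ w in 𝓝[≠] z, w ∈ U) :
    IsPreconnected U ∧ U.Nonempty := by
  have hc : (Uᶜ).Countable := by
    apply countable_of_eventually_compl
    intro z
    filter_upwards [hev z] with w hw using fun hc => hc hw
  have hpc : IsPathConnected (Uᶜᶜ) :=
    hc.isPathConnected_compl_of_one_lt_rank (by rw [Complex.rank_real_complex]; norm_num)
  rw [compl_compl] at hpc
  refine ⟨hpc.isConnected.isPreconnected, ?_⟩
  obtain ⟨w, hw⟩ := (hev 0).exists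
  exact ⟨w, hw⟩


/-- `ψ_f = f' / (f-1)²` and its derivative at an honest point -/
lemma hasDerivAt_psi {f : ℂ → ℂ} {z : ℂ} (ha : AnalyticAt ℂ f z) (h1 : f z ≠ 1) :
    HasDerivAt (fun w => deriv f w / (f w - 1) ^ 2)
      ((deriv (deriv f) z * (f z - 1) ^ 2 -
        deriv f z * (2 * (f z - 1) * deriv f z)) / ((f z - 1) ^ 2) ^ 2) z := by
  have hfd : HasDerivAt f (deriv f z) z := ha.differentiableAt.hasDerivAt
  have hdd : HasDerivAt (deriv f) (deriv (deriv f) z) z :=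
    (analyticAt_deriv ha).differentiableAt.hasDerivAt
  have hden : HasDerivAt (fun w => (f w - 1) ^ 2) (2 * (f z - 1) * deriv f z) z := by
    have := (hfd.sub_const 1).pow 2
    simpa [Pi.pow_def] using this
  exact hdd.div hden (pow_ne_zero 2 (sub_ne_zero.mpr h1))

/-- value of psi is nonzero at an honest point -/
lemma psi_ne_zero {f : ℂ → ℂ} {z : ℂ} (hd : deriv f z ≠ 0) (h1 : f z ≠ 1) :
    deriv f z / (f z - 1) ^ 2 ≠ 0 :=
  div_ne_zero hd (pow_ne_zero 2 (sub_ne_zero.mpr h1))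

lemma alg_main (a b x c d y : ℂ) (ha : a ≠ 0) (hc : c ≠ 0) (hx : x - 1 ≠ 0) (hy : y - 1 ≠ 0)
    (h : b / a - 2 * a / (x - 1) - (d / c - 2 * c / (y - 1)) = 0) :
    ((b * (x-1)^2 - a * (2 * (x-1) * a)) / ((x-1)^2)^2 * (c / (y-1)^2) -
      (a / (x-1)^2) * ((d * (y-1)^2 - c * (2 * (y-1) * c)) / ((y-1)^2)^2)) = 0 := by
  have hA : (b * (x-1)^2 - a * (2 * (x-1) * a)) / ((x-1)^2)^2
      = (a / (x-1)^2) * (b / a - 2 * a / (x - 1)) := by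
    field_simp
  have hD : (d * (y-1)^2 - c * (2 * (y-1) * c)) / ((y-1)^2)^2
      = (c / (y-1)^2) * (d / c - 2 * c / (y - 1)) := by
    field_simp
  rw [hA, hD]
  have hs : b / a - 2 * a / (x - 1) = d / c - 2 * c / (y - 1) := by
    have := sub_eq_zero.mp h
    exact this
  rw [hs]
  ring

lemma alg_mixed (c d y : ℂ) (hc : c ≠ 0) (hy : y - 1 ≠ 0)
    (h : d / c - 2 * c / (y - 1) = 0) :
    (d * (y-1)^2 - c * (2 * (y-1) * c)) / ((y-1)^2)^2 = 0 := by
  rw [div_eq_zero_iff]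
  left
  field_simp at h
  linear_combination (y - 1) * h


/-- The mixed-case computation: if the `G`-part of `H` vanishes, `ψ_G` has zero derivative. -/
lemma psi_deriv_zero_of_part {G : ℂ → ℂ} {z : ℂ} (ha : AnalyticAt ℂ G z)
    (hd : deriv G z ≠ 0) (h1 : G z ≠ 1)
    (hpart : deriv (deriv G) z / deriv G z - 2 * deriv G z / (G z - 1) = 0) :
    HasDerivAt (fun w => deriv G w / (G w - 1) ^ 2) 0 z := by
  have h := hasDerivAt_psi ha h1
  have hz : G z - 1 ≠ 0 := sub_ne_zero.mpr h1
  have key : (deriv (deriv G) z * (G z - 1) ^ 2 -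
      deriv G z * (2 * (G z - 1) * deriv G z)) / ((G z - 1) ^ 2) ^ 2 = 0 := by
    exact alg_mixed _ _ _ hd hz hpart
  rwa [key] at h

/-- The main-case computation: the ratio `ψ_F/ψ_G` has zero derivative. -/
lemma ratio_deriv_zero {F G : ℂ → ℂ} {z : ℂ}
    (haF : AnalyticAt ℂ F z) (hdF : deriv F z ≠ 0) (h1F : F z ≠ 1)
    (haG : AnalyticAt ℂ G z) (hdG : deriv G z ≠ 0) (h1G : G z ≠ 1)
    (hH : deriv (deriv F) z / deriv F z - 2 * deriv F z / (F z - 1) -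
      (deriv (deriv G) z / deriv G z - 2 * deriv G z / (G z - 1)) = 0) :
    HasDerivAt (fun w => (deriv F w / (F w - 1) ^ 2) / (deriv G w / (G w - 1) ^ 2)) 0 z := by
  have h := (hasDerivAt_psi haF h1F).div (hasDerivAt_psi haG h1G) (psi_ne_zero hdG h1G)
  have hzF : F z - 1 ≠ 0 := sub_ne_zero.mpr h1F
  have hzG : G z - 1 ≠ 0 := sub_ne_zero.mpr h1G
  have key : ((deriv (deriv F) z * (F z - 1) ^ 2 - deriv F z * (2 * (F z - 1) * deriv F z)) /
        ((F z - 1) ^ 2) ^ 2 * (deriv G z / (G z - 1) ^ 2) -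
      (deriv F z / (F z - 1) ^ 2) *
        ((deriv (deriv G) z * (G z - 1) ^ 2 - deriv G z * (2 * (G z - 1) * deriv G z)) /
          ((G z - 1) ^ 2) ^ 2)) / (deriv G z / (G z - 1) ^ 2) ^ 2 = 0 := by
    rw [div_eq_zero_iff]
    left
    exact alg_main _ _ _ _ _ _ hdF hdG hzF hzG hH
  rwa [key] at h


lemma order_eq_of_funext {f g : ℂ → ℂ} {z : ℂ} (h : f = g) (hf : MeromorphicAt f z)
    (hg : MeromorphicAt g z) : hf.order = hg.order := by subst h; rfl

lemma mOrder_eq_int {f : ℂ → ℂ} {z : ℂ} (hf : MeromorphicAt f z) {n : ℤ}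
    (hn : hf.order = n) : mOrder f z = n := by
  rw [mOrder_eq_untop hf, hn]; rfl

lemma pmult_eq_zero_of_order_nonneg {f : ℂ → ℂ} {z : ℂ} (hf : MeromorphicAt f z)
    (h : 0 ≤ hf.order) : pmult f z = 0 := by
  rw [pmult, mOrder_eq_untop hf]
  rcases eq_or_ne hf.order ⊤ with ht | ht
  · rw [ht]; rfl
  · obtain ⟨n, hn⟩ := WithTop.ne_top_iff_exists.mp ht
    rw [← hn] at h ⊢
    have : 0 ≤ n := by exact_mod_cast h
    simp [WithTop.untopD_coe]
    omega

lemma const_order_nonneg (D : ℂ) (z : ℂ) : 0 ≤ (MeromorphicAt.const D z).order := by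
  rw [order_nonneg_iff]
  exact ⟨fun _ => D, analyticAt_const, EventuallyEq.refl _ _⟩

/-- the per-point endgame in the main case -/
lemma point_conclusion (F G : ℂ → ℂ) (hF : ∀ z, MeromorphicAt F z)
    (hG : ∀ z, MeromorphicAt G z)
    (hFnf : ∀ z, ¬ ∀ᶠ w in 𝓝[≠] z, deriv F w = 0)
    (hGnf : ∀ z, ¬ ∀ᶠ w in 𝓝[≠] z, deriv G w = 0)
    (C D : ℂ) (hC : C ≠ 0)
    (hgerm : ∀ z, (fun w => (F w - 1)⁻¹) =ᶠ[𝓝[≠] z] (fun w => C * (G w - 1)⁻¹ + D))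
    (hshare : ∀ z, min (pmult F z) 1 = min (pmult G z) 1) :
    (∀ z, amult F 1 z = amult G 1 z) ∧ (∀ z, pmult F z = pmult G z) := by
  -- pointwise data
  have main : ∀ z : ℂ, amult F 1 z = amult G 1 z ∧ pmult F z = pmult G z := by
    intro z
    have hF1m : MeromorphicAt (fun w => F w - 1) z := (hF z).sub (MeromorphicAt.const 1 z)
    have hG1m : MeromorphicAt (fun w => G w - 1) z := (hG z).sub (MeromorphicAt.const 1 z)
    obtain ⟨m, hm⟩ := WithTop.ne_top_iff_exists.mp (order_sub_one_ne_top hF hFnf z)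
    obtain ⟨m', hm'⟩ := WithTop.ne_top_iff_exists.mp (order_sub_one_ne_top hG hGnf z)
    replace hm := hm.symm; replace hm' := hm'.symm
    have hu : MeromorphicAt (fun w => (F w - 1)⁻¹) z := hF1m.inv
    have hv : MeromorphicAt (fun w => (G w - 1)⁻¹) z := hG1m.inv
    have horder_u : hu.order = -m := order_inv_of_int hF1m m hm
    have horder_v : hv.order = -m' := order_inv_of_int hG1m m' hm'
    have hcv : MeromorphicAt (fun w => C * (G w - 1)⁻¹) z := (MeromorphicAt.const C z).mul hv
    have horder_cv : hcv.order = -m' := by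
      have h : hcv.order = (((MeromorphicAt.const C z)).mul hv).order := rfl
      rw [h, order_const_smul hv hC, horder_v]
    have hRHS : MeromorphicAt (fun w => C * (G w - 1)⁻¹ + D) z :=
      hcv.add (MeromorphicAt.const D z)
    have horder_eq : hu.order = hRHS.order := by
      have h := order_congr hu (hgerm z)
      exact h.symm
    -- claim A
    have claimA : 0 < m' → hRHS.order = (-m' : ℤ) := by
      intro hm'0
      refine order_add_of_lt hcv (MeromorphicAt.const D z) hRHS (fun w => rfl) (-m')
        horder_cv ?_
      calc ((-m' : ℤ) : WithTop ℤ) < (0 : ℤ) := by exact_mod_cast (by omega : (-m' : ℤ) < 0)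
        _ ≤ (MeromorphicAt.const D z).order := const_order_nonneg D z
    -- claim B
    have claimB : m' ≤ 0 → 0 ≤ hRHS.order := by
      intro hm'0
      have hvord : 0 ≤ hv.order := by
        rw [horder_v]
        exact_mod_cast (by omega : (0:ℤ) ≤ -m')
      obtain ⟨g, hg, hgeq⟩ := (order_nonneg_iff hv).mp hvord
      refine (order_nonneg_iff hRHS).mpr ⟨fun w => C * g w + D,
        (analyticAt_const.mul hg).add analyticAt_const, ?_⟩
      filter_upwards [hgeq] with w hw
      simp only [hw]
    -- goal 1
    have goal1 : amult F 1 z = amult G 1 z := by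
      have ha1 : amult F 1 z = m.toNat := by
        rw [amult, zmult, mOrder_eq_int hF1m hm]
      have ha2 : amult G 1 z = m'.toNat := by
        rw [amult, zmult, mOrder_eq_int hG1m hm']
      rw [ha1, ha2]
      by_cases hm0 : 0 < m
      · by_cases hm'0 : 0 < m'
        · have h1 := claimA hm'0
          rw [horder_u, h1] at horder_eq
          have : (-m : ℤ) = -m' := by exact_mod_cast horder_eq
          omega
        · exfalso
          have h2 := claimB (by omega)
          rw [← horder_eq, horder_u] at h2
          have : (0:ℤ) ≤ -m := by exact_mod_cast h2
          omega
      · by_cases hm'0 : 0 < m'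
        · exfalso
          have h1 := claimA hm'0
          rw [horder_u, h1] at horder_eq
          have : (-m : ℤ) = -m' := by exact_mod_cast horder_eq
          omega
        · omega
    -- goal 2
    have goal2 : pmult F z = pmult G z := by
      by_cases hm0 : m < 0
      · -- F has a pole at z
        have horderF : (hF z).order = m :=
          order_add_of_lt hF1m (MeromorphicAt.const 1 z) (hF z)
            (fun w => by simp) m hm
            (by rw [order_const one_ne_zero]; exact_mod_cast hm0)
        have hpF : pmult F z = (-m).toNat := by
          rw [pmult, mOrder_eq_int (hF z) horderF]
        have hpFpos : 1 ≤ pmult F z := by rw [hpF]; omega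
        have hsh := hshare z
        have hpGpos : 1 ≤ pmult G z := by
          rcases Nat.lt_or_ge (pmult G z) 1 with h | h
          · exfalso
            interval_cases h' : pmult G z
            · simp [h'] at hsh; omega
          · exact h
        -- extract integer order of G
        have hGne : (hG z).order ≠ ⊤ := by
          intro ht
          have : mOrder G z = 0 := by rw [mOrder_eq_untop (hG z), ht]; rfl
          rw [pmult, this] at hpGpos
          simp at hpGpos
        obtain ⟨n', hn'⟩ := WithTop.ne_top_iff_exists.mp hGne
        replace hn' := hn'.symm
        have hn'neg : n' < 0 := by
          have : pmult G z = (-n').toNat := by rw [pmult, mOrder_eq_int (hG z) hn']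
          omega
        have horderG1 : hG1m.order = n' :=
          order_add_of_lt (hG z) (MeromorphicAt.const (-1) z) hG1m
            (fun w => by simp [sub_eq_add_neg]) n' hn'
            (by rw [order_const (by norm_num : (-1:ℂ) ≠ 0)]; exact_mod_cast hn'neg)
        have hm'n' : m' = n' := by
          rw [hm'] at horderG1; exact_mod_cast horderG1
        -- D = 0
        have hD : D = 0 := by
          by_contra hD0
          have h0 : hRHS.order = (0 : ℤ) := by
            refine order_add_of_lt (MeromorphicAt.const D z) hcv hRHS
              (fun w => by ring) 0 (order_const hD0 z) ?_
            rw [horder_cv]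
            exact_mod_cast (by omega : (0:ℤ) < -m')
          rw [horder_u, h0] at horder_eq
          have : (-m : ℤ) = 0 := by exact_mod_cast horder_eq
          omega
        subst hD
        have hfun : (fun w => C * (G w - 1)⁻¹ + 0) = (fun w => C * (G w - 1)⁻¹) := by
          funext w; ring
        have : hRHS.order = hcv.order := order_eq_of_funext hfun hRHS hcv
        rw [horder_u, this, horder_cv] at horder_eq
        have hmm' : m = m' := by
          have : (-m : ℤ) = -m' := by exact_mod_cast horder_eq
          omega
        have hpG : pmult G z = (-n').toNat := by rw [pmult, mOrder_eq_int (hG z) hn']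
        rw [hpF, hpG]
        omega
      · -- no pole of F at z
        have hpF : pmult F z = 0 := by
          refine pmult_eq_zero_of_order_nonneg (hF z) ?_
          have h1 : 0 ≤ hF1m.order := by
            rw [hm]; exact_mod_cast (by omega : (0:ℤ) ≤ m)
          obtain ⟨g, hg, hgeq⟩ := (order_nonneg_iff hF1m).mp h1
          refine (order_nonneg_iff (hF z)).mpr ⟨fun w => g w + 1, hg.add analyticAt_const, ?_⟩
          filter_upwards [hgeq] with w hw
          have : F w - 1 = g w := hw
          linear_combination this
        have hsh := hshare z
        rw [hpF] at hsh ⊢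
        simp only [Nat.zero_min] at hsh
        omega
    exact ⟨goal1, goal2⟩
  exact ⟨fun z => (main z).1, fun z => (main z).2⟩


lemma mOrder_zero_of_flat {f : ℂ → ℂ} {z : ℂ} (hf : MeromorphicAt f z)
    (hflat : ∀ᶠ w in 𝓝[≠] z, deriv f w = 0) : mOrder f z = 0 := by
  rcases order_flat hf hflat with h | h
  · exact mOrder_eq_int hf h
  · rw [mOrder_eq_untop hf, h]; rfl

/-- Mixed case: `deriv F` germ-zero everywhere, `deriv G` nowhere: contradiction. -/
lemma mixed_contradiction (F G : ℂ → ℂ) (hF : ∀ z, MeromorphicAt F z)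
    (hG : ∀ z, MeromorphicAt G z)
    (hHeq : ∀ z, deriv (deriv F) z / deriv F z - 2 * deriv F z / (F z - 1)
      = deriv (deriv G) z / deriv G z - 2 * deriv G z / (G z - 1))
    (hshare : ∀ z, min (pmult F z) 1 = min (pmult G z) 1)
    (hFflat : ∀ z, ∀ᶠ w in 𝓝[≠] z, deriv F w = 0)
    (hGnf : ∀ z, ¬ ∀ᶠ w in 𝓝[≠] z, deriv G w = 0) : False := by
  set W : Set ℂ := {z | ∀ᶠ w in 𝓝 z, deriv F w = 0} with hW
  have hWopen : IsOpen W := by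
    rw [isOpen_iff_mem_nhds]
    intro z hz
    exact (hz : ∀ᶠ w in 𝓝 z, deriv F w = 0).eventually_nhds
  have hWev : ∀ z, ∀ᶠ w in 𝓝[≠] z, w ∈ W := by
    intro z
    obtain ⟨s, hso, hzs, hs⟩ := exists_open_of_eventually_nhdsNE (hFflat z)
    have h1 : ∀ᶠ w in 𝓝[≠] z, w ∈ s :=
      eventually_nhdsWithin_of_eventually_nhds (hso.eventually_mem hzs)
    filter_upwards [h1, self_mem_nhdsWithin] with w hw hwz
    have : s \ {z} ∈ 𝓝 w := (hso.sdiff isClosed_singleton).mem_nhds ⟨hw, hwz⟩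
    filter_upwards [this] with y hy using hs y hy.1 hy.2
  set U : Set ℂ := {z | AnalyticAt ℂ G z ∧ deriv G z ≠ 0 ∧ G z ≠ 1} ∩ W with hU
  have hUopen : IsOpen U := (honest_isOpen G).inter hWopen
  have hUev : ∀ z, ∀ᶠ w in 𝓝[≠] z, w ∈ U := by
    intro z
    filter_upwards [honest_eventually hG hGnf z, hWev z] with w h1 h2 using ⟨h1, h2⟩
  obtain ⟨hUpre, hUne⟩ := good_set_facts hUopen hUev
  obtain ⟨z₀, hz₀⟩ := hUne
  -- the function ψ_G is constant on U
  set ψ : ℂ → ℂ := fun w => deriv G w / (G w - 1) ^ 2 with hψ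
  have hDψ : ∀ z ∈ U, HasDerivAt ψ 0 z := by
    rintro z ⟨⟨ha, hd, h1⟩, hzW⟩
    refine psi_deriv_zero_of_part ha hd h1 ?_
    have hdF0 : deriv F z = 0 := (hzW : ∀ᶠ w in 𝓝 z, deriv F w = 0).self_of_nhds
    have hddF0 : deriv (deriv F) z = 0 := by
      have heq : deriv F =ᶠ[𝓝 z] (fun _ => 0) := hzW
      rw [heq.deriv_eq, deriv_const]
    have := hHeq z
    rw [hdF0, hddF0] at this
    simpa using this.symm
  have hconst : ∀ z ∈ U, ψ z = ψ z₀ := fun z hz =>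
    const_of_hasDerivAt_zero hUopen hUpre hDψ hz hz₀
  set K : ℂ := ψ z₀ with hK
  have hK0 : K ≠ 0 := by
    obtain ⟨⟨ha, hd, h1⟩, _⟩ := hz₀
    exact div_ne_zero hd (pow_ne_zero 2 (sub_ne_zero.mpr h1))
  -- v = (G-1)⁻¹ satisfies v' = -ψ = -K on U, hence v + K·id is constant on U
  set v : ℂ → ℂ := fun w => (G w - 1)⁻¹ with hv
  have hDv : ∀ z ∈ U, HasDerivAt (fun w => v w + K * w) 0 z := by
    rintro z hzU
    obtain ⟨⟨ha, hd, h1⟩, -⟩ := id hzU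
    have hGd : HasDerivAt G (deriv G z) z := ha.differentiableAt.hasDerivAt
    have hvd : HasDerivAt v (-(deriv G z) / (G z - 1) ^ 2) z :=
      (hGd.sub_const 1).inv (sub_ne_zero.mpr h1)
    have := hvd.add ((hasDerivAt_id z).const_mul K)
    have hval : -(deriv G z) / (G z - 1) ^ 2 + K * 1 = 0 := by
      have h2 : deriv G z / (G z - 1) ^ 2 = K := hconst z hzU
      rw [neg_div, h2]
      ring
    rwa [hval] at this
  have hlinconst : ∀ z ∈ U, v z + K * z = v z₀ + K * z₀ := fun z hz =>
    const_of_hasDerivAt_zero hUopen hUpre hDv hz hz₀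
  set Lc : ℂ := v z₀ + K * z₀ with hLc
  -- v agrees with the linear function -K·w + Lc near w₁ := Lc/K
  set w₁ : ℂ := Lc / K with hw₁
  have hlin : v =ᶠ[𝓝[≠] w₁] (fun w => -K * w + Lc) := by
    filter_upwards [hUev w₁] with w hw
    have := hlinconst w hw
    linear_combination this
  have hvm : MeromorphicAt v w₁ := ((hG w₁).sub (MeromorphicAt.const 1 w₁)).inv
  have hlinm : MeromorphicAt (fun w => -K * w + Lc) w₁ :=
    ((MeromorphicAt.const (-K) w₁).mul (MeromorphicAt.id w₁)).add
      (MeromorphicAt.const Lc w₁)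
  have hlinorder : hlinm.order = (1 : ℤ) := by
    refine (hlinm.order_eq_int_iff 1).mpr ⟨fun _ => -K, analyticAt_const, neg_ne_zero.mpr hK0, ?_⟩
    filter_upwards with w
    rw [hw₁]
    have : Lc / K * K = Lc := div_mul_cancel₀ Lc hK0
    simp only [zpow_one, smul_eq_mul]
    linear_combination -this
  have hvorder : hvm.order = (1 : ℤ) := by
    have h := order_congr hvm hlin
    rw [← h]
    exact hlinorder
  -- hence G - 1 has a pole of order 1 at w₁
  have hG1m : MeromorphicAt (fun w => G w - 1) w₁ := (hG w₁).sub (MeromorphicAt.const 1 w₁)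
  have hG1order : hG1m.order = (-1 : ℤ) := by
    have h1 : hvm.inv.order = (-1 : ℤ) := order_inv_of_int hvm 1 hvorder
    have hfun : v⁻¹ = (fun w => G w - 1) := by
      funext w
      simp [hv]
    have := order_eq_of_funext hfun hvm.inv hG1m
    rw [← this, h1]
  have hGorder : (hG w₁).order = (-1 : ℤ) :=
    order_add_of_lt hG1m (MeromorphicAt.const 1 w₁) (hG w₁)
      (fun w => by simp) (-1) hG1order
      (by rw [order_const one_ne_zero]; exact_mod_cast (by norm_num : (-1:ℤ) < 0))
  have hpG : pmult G w₁ = 1 := by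
    rw [pmult, mOrder_eq_int (hG w₁) hGorder]
    rfl
  have hpF : pmult F w₁ = 0 := by
    rw [pmult, mOrder_zero_of_flat (hF w₁) (hFflat w₁)]
    rfl
  have := hshare w₁
  rw [hpF, hpG] at this
  simp at this


/-- Main case: neither `deriv F` nor `deriv G` is germ-zero anywhere. -/
lemma main_case (F G : ℂ → ℂ) (hF : ∀ z, MeromorphicAt F z)
    (hG : ∀ z, MeromorphicAt G z)
    (hHeq : ∀ z, deriv (deriv F) z / deriv F z - 2 * deriv F z / (F z - 1)
      = deriv (deriv G) z / deriv G z - 2 * deriv G z / (G z - 1))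
    (hshare : ∀ z, min (pmult F z) 1 = min (pmult G z) 1)
    (hFnf : ∀ z, ¬ ∀ᶠ w in 𝓝[≠] z, deriv F w = 0)
    (hGnf : ∀ z, ¬ ∀ᶠ w in 𝓝[≠] z, deriv G w = 0) :
    (∀ z, amult F 1 z = amult G 1 z) ∧ (∀ z, pmult F z = pmult G z) := by
  set U : Set ℂ := {z | AnalyticAt ℂ F z ∧ deriv F z ≠ 0 ∧ F z ≠ 1} ∩
    {z | AnalyticAt ℂ G z ∧ deriv G z ≠ 0 ∧ G z ≠ 1} with hU
  have hUopen : IsOpen U := (honest_isOpen F).inter (honest_isOpen G)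
  have hUev : ∀ z, ∀ᶠ w in 𝓝[≠] z, w ∈ U := by
    intro z
    filter_upwards [honest_eventually hF hFnf z, honest_eventually hG hGnf z]
      with w h1 h2 using ⟨h1, h2⟩
  obtain ⟨hUpre, hUne⟩ := good_set_facts hUopen hUev
  obtain ⟨z₀, hz₀⟩ := hUne
  set ψF : ℂ → ℂ := fun w => deriv F w / (F w - 1) ^ 2 with hψF
  set ψG : ℂ → ℂ := fun w => deriv G w / (G w - 1) ^ 2 with hψG
  have hψG0 : ∀ z ∈ U, ψG z ≠ 0 := by
    rintro z ⟨-, ⟨ha, hd, h1⟩⟩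
    exact div_ne_zero hd (pow_ne_zero 2 (sub_ne_zero.mpr h1))
  have hψF0 : ∀ z ∈ U, ψF z ≠ 0 := by
    rintro z ⟨⟨ha, hd, h1⟩, -⟩
    exact div_ne_zero hd (pow_ne_zero 2 (sub_ne_zero.mpr h1))
  have hDr : ∀ z ∈ U, HasDerivAt (fun w => ψF w / ψG w) 0 z := by
    rintro z ⟨⟨haF, hdF, h1F⟩, ⟨haG, hdG, h1G⟩⟩
    exact ratio_deriv_zero haF hdF h1F haG hdG h1G (sub_eq_zero.mpr (hHeq z))
  set C : ℂ := ψF z₀ / ψG z₀ with hC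
  have hC0 : C ≠ 0 := div_ne_zero (hψF0 z₀ hz₀) (hψG0 z₀ hz₀)
  have hrel : ∀ z ∈ U, ψF z = C * ψG z := by
    intro z hz
    have h := const_of_hasDerivAt_zero hUopen hUpre hDr hz hz₀
    have h2 : ψF z / ψG z = C := h
    field_simp [hψG0 z hz] at h2
    exact h2.trans (mul_comm _ _)
  set u : ℂ → ℂ := fun w => (F w - 1)⁻¹ with hu
  set v : ℂ → ℂ := fun w => (G w - 1)⁻¹ with hv
  have hDs : ∀ z ∈ U, HasDerivAt (fun w => u w - C * v w) 0 z := by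
    rintro z hz
    obtain ⟨⟨haF, hdF, h1F⟩, ⟨haG, hdG, h1G⟩⟩ := id hz
    have hud : HasDerivAt u (-(deriv F z) / (F z - 1) ^ 2) z :=
      (haF.differentiableAt.hasDerivAt.sub_const 1).inv (sub_ne_zero.mpr h1F)
    have hvd : HasDerivAt v (-(deriv G z) / (G z - 1) ^ 2) z :=
      (haG.differentiableAt.hasDerivAt.sub_const 1).inv (sub_ne_zero.mpr h1G)
    have := hud.sub (hvd.const_mul C)
    have hval : -(deriv F z) / (F z - 1) ^ 2 - C * (-(deriv G z) / (G z - 1) ^ 2) = 0 := by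
      have h2 : deriv F z / (F z - 1) ^ 2 = C * (deriv G z / (G z - 1) ^ 2) := hrel z hz
      simp only [neg_div]
      linear_combination -h2
    rwa [hval] at this
  set D : ℂ := u z₀ - C * v z₀ with hD
  have hUD : ∀ z ∈ U, u z - C * v z = D := fun z hz =>
    const_of_hasDerivAt_zero hUopen hUpre hDs hz hz₀
  have hgerm : ∀ z, (fun w => (F w - 1)⁻¹) =ᶠ[𝓝[≠] z] (fun w => C * (G w - 1)⁻¹ + D) := by
    intro z
    filter_upwards [hUev z] with w hw
    have := hUD w hw
    linear_combination this
  exact point_conclusion F G hF hG hFnf hGnf C D hC0 hgerm hshare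



/-- if `H ≡ 0` and `F`, `G` share `(∞,0)`, then they share `(1,∞)`
and `(∞,∞)`. -/
theorem stmt13_H_identically_zero
    (F G : ℂ → ℂ) (hF : MeroOn F) (hG : MeroOn G)
    (hFc : NonconstantFn F) (hGc : NonconstantFn G)
    (hH : ∀ z, Hfun F G z = 0)
    (hshare : SharePolesIM F G) :
    (∀ z, amult F 1 z = amult G 1 z) ∧ (∀ z, pmult F z = pmult G z) := by
  have hHeq : ∀ z, deriv (deriv F) z / deriv F z - 2 * deriv F z / (F z - 1)
      = deriv (deriv G) z / deriv G z - 2 * deriv G z / (G z - 1) := by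
    intro z
    have h := hH z
    simp only [Hfun] at h
    exact sub_eq_zero.mp h
  have hsh : ∀ z, min (pmult F z) 1 = min (pmult G z) 1 := hshare
  have hdF : ∀ z, MeromorphicAt (deriv F) z := fun z => meromorphicAt_deriv (hF z)
  have hdG : ∀ z, MeromorphicAt (deriv G) z := fun z => meromorphicAt_deriv (hG z)
  rcases germZero_dichotomy hdF with hFf | hFnf <;>
    rcases germZero_dichotomy hdG with hGf | hGnf
  · -- both germ-constant
    constructor
    · intro z
      have hF1m : MeromorphicAt (fun w => F w - 1) z := (hF z).sub (MeromorphicAt.const 1 z)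
      have hG1m : MeromorphicAt (fun w => G w - 1) z := (hG z).sub (MeromorphicAt.const 1 z)
      have hflatF1 : ∀ᶠ w in 𝓝[≠] z, deriv (fun w => F w - 1) w = 0 := by
        filter_upwards [hFf z] with w hw
        rw [deriv_sub_const]
        exact hw
      have hflatG1 : ∀ᶠ w in 𝓝[≠] z, deriv (fun w => G w - 1) w = 0 := by
        filter_upwards [hGf z] with w hw
        rw [deriv_sub_const]
        exact hw
      have h1 := mOrder_zero_of_flat hF1m hflatF1
      have h2 := mOrder_zero_of_flat hG1m hflatG1
      simp only [amult, zmult]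
      rw [h1, h2]
    · intro z
      have h1 := mOrder_zero_of_flat (hF z) (hFf z)
      have h2 := mOrder_zero_of_flat (hG z) (hGf z)
      simp only [pmult]
      rw [h1, h2]
  · exact (mixed_contradiction F G hF hG hHeq hsh hFf hGnf).elim
  · exact (mixed_contradiction G F hG hF (fun z => (hHeq z).symm)
      (fun z => (hsh z).symm) hGf hFnf).elim
  · exact main_case F G hF hG hHeq hsh hFnf hGnf

end Nev
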